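/- Let k ≤ n and a ≤ 2^k. Then for each position j with n−k ≤ j ≤ n−1, m_j(I_{2^k − a}) = (2^{k−1} − a) + m_j(I_a), and (2^k − a) − m_j(I_{2^k − a}) = (2^{k−1} − a) + (a − m_j(I_a)). -/

import Mathlib

/-!
Complementing the last `k` coordinates (`flipLow k`) maps a string of value `t < 2^k` to one of
value `2^k - 1 - t` and flips coordinate `j`. Hence the strings of `I_{2^k - a}` with a `1` at `j`
correspond to the strings of `I_{2^k} \ I_a` with a `0` at `j`. Since the same involution shows
that exactly half of `I_{2^k}`, i.e. `2^{k-1}` strings, have a `0` at `j`, this count is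
`2^{k-1} - (a - m_j(I_a))`.
-/

/-- The hypercube graph on `{0,1}^n`: two strings adjacent iff they differ in one coordinate. -/
def hypercube (n : ℕ) : SimpleGraph (Fin n → Bool) where
  Adj x y := (Finset.univ.filter (fun i => x i ≠ y i)).card = 1
  symm := by constructor; intro x y h; simpa [ne_comm] using h
  loopless := by constructor; intro x h; simp at h

/-- The integer represented by a string, position 0 most significant. -/
def bval {n : ℕ} (x : Fin n → Bool) : ℕ :=
  ∑ i : Fin n, if x i then 2 ^ (n - 1 - i.val) else 0

/-- The initial segment of length `a` in the binary order on `{0,1}^n`. -/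
def initSeg (n a : ℕ) : Finset (Fin n → Bool) :=
  Finset.univ.filter (fun x => bval x < a)

/-- `m_j(S)`: number of elements of `S` with a `1` in coordinate `j`. -/
def mCount {n : ℕ} (S : Finset (Fin n → Bool)) (j : Fin n) : ℕ :=
  (S.filter (fun x => x j = true)).card

/-- The hyperface `F_{j,k}` of strings whose `j`-th coordinate equals `k`. -/
def face (n : ℕ) (j : Fin n) (k : Bool) : Finset (Fin n → Bool) :=
  Finset.univ.filter (fun x => x j = k)

section BinaryOrder

variable {n : ℕ}

lemma bval_eq_sum_rev (x : Fin n → Bool) :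
    bval x = ∑ i : Fin n, if x i.rev then 2 ^ (i : ℕ) else 0 := by
  rw [bval, ← Equiv.sum_comp Fin.revPerm]
  refine Finset.sum_congr rfl fun i _ => ?_
  have hi := i.isLt
  simp only [Fin.revPerm_apply, Fin.val_rev]
  congr 2
  omega

def bvalEquiv (n : ℕ) : (Fin n → Bool) ≃ Fin (2 ^ n) :=
  (Equiv.arrowCongr Fin.revPerm finTwoEquiv.symm).trans finFunctionFinEquiv

lemma coe_bvalEquiv (x : Fin n → Bool) : (bvalEquiv n x : ℕ) = bval x := by
  rw [bval_eq_sum_rev, bvalEquiv, Equiv.trans_apply, finFunctionFinEquiv_apply]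
  refine Finset.sum_congr rfl fun i _ => ?_
  cases h : x i.rev <;> simp [Equiv.arrowCongr_apply, Fin.revPerm_symm, h, finTwoEquiv]

lemma card_initSeg {m : ℕ} (hm : m ≤ 2 ^ n) : (initSeg n m).card = m := by
  have hmap : (initSeg n m).map (bvalEquiv n).toEmbedding =
      Finset.univ.filter (fun t : Fin (2 ^ n) => (t : ℕ) < m) := by
    ext t
    obtain ⟨x, rfl⟩ := (bvalEquiv n).surjective t
    simp [initSeg, coe_bvalEquiv]
  rw [← Finset.card_map, hmap, Fin.card_filter_val_lt, min_eq_right hm]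

lemma initSeg_mono : Monotone (initSeg n) := fun _ _ h _ hx => by
  simp only [initSeg, Finset.mem_filter, Finset.mem_univ, true_and] at hx ⊢
  omega

lemma two_pow_le_bval {x : Fin n → Bool} {i : Fin n} (hx : x i = true) :
    2 ^ (n - 1 - i.val) ≤ bval x := by
  refine le_of_eq_of_le ?_ (Finset.single_le_sum
    (f := fun i => if x i then 2 ^ (n - 1 - i.val) else 0) (fun _ _ => Nat.zero_le _)
    (Finset.mem_univ i))
  simp [hx]

lemma bval_lowMask {k : ℕ} (hk : k ≤ n) :
    bval (fun i : Fin n => decide (n - k ≤ i)) = 2 ^ k - 1 := by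
  have hrev : ∀ i : Fin n, (n - k ≤ i.rev.val) ↔ i.val < k := fun i => by
    have := i.isLt; rw [Fin.val_rev]; omega
  simp only [bval_eq_sum_rev, hrev, decide_eq_true_eq]
  rw [Fin.sum_univ_eq_sum_range (fun i => if i < k then 2 ^ i else 0), ← Finset.sum_filter,
    show (Finset.range n).filter (· < k) = Finset.range k by ext; simp; omega,
    Nat.geomSum_eq le_rfl, Nat.div_one]

end BinaryOrder

section FlipLow

variable {n k : ℕ}

def flipLow (k : ℕ) (x : Fin n → Bool) : Fin n → Bool :=
  fun i => if n - k ≤ i.val then !x i else x i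

lemma flipLow_flipLow (x : Fin n → Bool) : flipLow k (flipLow k x) = x := by
  funext i
  by_cases h : n - k ≤ i.val <;> simp [flipLow, h]

lemma flipLow_apply_of_le (x : Fin n → Bool) {j : Fin n} (hj : n - k ≤ j.val) :
    flipLow k x j = !x j := if_pos hj

lemma bval_le_bval {x y : Fin n → Bool} (h : ∀ i, x i = true → y i = true) : bval x ≤ bval y :=
  Finset.sum_le_sum fun i _ => by
    by_cases hx : x i <;> simp [hx, h i]

lemma bval_lt_two_pow_iff (hk : k ≤ n) (x : Fin n → Bool) :
    bval x < 2 ^ k ↔ ∀ i : Fin n, i.val < n - k → x i = false := by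
  constructor
  · intro h i hi
    by_contra hx
    have := two_pow_le_bval (Bool.not_eq_false _ ▸ hx)
    have : 2 ^ k ≤ 2 ^ (n - 1 - i.val) := Nat.pow_le_pow_right two_pos (by omega)
    omega
  · intro h
    have hle : bval x ≤ bval (fun i : Fin n => decide (n - k ≤ i)) :=
      bval_le_bval fun i hi => decide_eq_true (by by_contra hlt; simp [h i (by omega)] at hi)
    rw [bval_lowMask hk] at hle
    have := Nat.one_le_two_pow (n := k)
    omega

lemma bval_add_bval_flipLow (hk : k ≤ n) {x : Fin n → Bool} (hx : bval x < 2 ^ k) :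
    bval x + bval (flipLow k x) = 2 ^ k - 1 := by
  rw [bval_lt_two_pow_iff hk] at hx
  rw [← bval_lowMask hk, bval, bval, bval, ← Finset.sum_add_distrib]
  refine Finset.sum_congr rfl fun i _ => ?_
  by_cases h : n - k ≤ i.val
  · cases hxi : x i <;> simp [flipLow, h, hxi]
  · simp [flipLow, h, hx i (by omega)]

end FlipLow

section Counting

variable {n k : ℕ} {j : Fin n}

lemma card_filter_initSeg_two_pow_sub (hk : k ≤ n) {a : ℕ} (ha : a ≤ 2 ^ k)
    (hj : n - k ≤ j.val) (b : Bool) :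
    ((initSeg n (2 ^ k - a)).filter (fun x => x j = b)).card =
      ((initSeg n (2 ^ k)).filter (fun x => x j = !b) \
        (initSeg n a).filter (fun x => x j = !b)).card := by
  refine Finset.card_nbij' (flipLow k) (flipLow k) ?_ ?_
    (fun x _ => flipLow_flipLow x) (fun x _ => flipLow_flipLow x)
  · intro x hx
    simp only [initSeg, Finset.coe_filter, Finset.coe_sdiff, Finset.mem_filter, Finset.mem_univ,
      true_and, Set.mem_sdiff, Set.mem_ofPred_eq, flipLow_apply_of_le _ hj] at hx ⊢
    have := bval_add_bval_flipLow hk (x := x) (by omega)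
    refine ⟨⟨by omega, by rw [hx.2]⟩, fun h => by omega⟩
  · intro y hy
    simp only [initSeg, Finset.coe_filter, Finset.coe_sdiff, Finset.mem_filter, Finset.mem_univ,
      true_and, Set.mem_sdiff, Set.mem_ofPred_eq, flipLow_apply_of_le _ hj] at hy ⊢
    obtain ⟨⟨hlt, hyj⟩, hnot⟩ := hy
    have hay : a ≤ bval y := not_lt.1 fun h => hnot ⟨h, hyj⟩
    have := bval_add_bval_flipLow hk hlt
    exact ⟨by omega, by rw [hyj, Bool.not_not]⟩

lemma card_filter_initSeg_two_pow (hk : k ≤ n) (hj : n - k ≤ j.val) (b : Bool) :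
    ((initSeg n (2 ^ k)).filter (fun x => x j = b)).card = 2 ^ (k - 1) := by
  have hswap := card_filter_initSeg_two_pow_sub hk (Nat.zero_le _) hj b
  have hsplit := Finset.card_filter_add_card_filter_not (s := initSeg n (2 ^ k)) (fun x => x j = b)
  have hempty : initSeg n 0 = ∅ := by simp [initSeg]
  simp only [Nat.sub_zero, hempty, Finset.filter_empty, Finset.sdiff_empty,
    card_initSeg (Nat.pow_le_pow_right two_pos hk), Bool.eq_not_iff, ne_eq] at hswap hsplit
  have hpow : 2 ^ k = 2 ^ (k - 1) * 2 := by rw [← pow_succ, Nat.sub_add_cancel (by omega)]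
  omega

end Counting

theorem stmt_11 (n k a : ℕ) (hk : k ≤ n) (ha : a ≤ 2 ^ k) (j : Fin n)
    (hj : n - k ≤ j.val) :
    (mCount (initSeg n (2 ^ k - a)) j : ℤ) =
      ((2 : ℤ) ^ (k - 1) - a) + mCount (initSeg n a) j ∧
    ((2 ^ k - a : ℕ) : ℤ) - mCount (initSeg n (2 ^ k - a)) j =
      ((2 : ℤ) ^ (k - 1) - a) + ((a : ℤ) - mCount (initSeg n a) j) := by
  have hflip := card_filter_initSeg_two_pow_sub hk ha hj true
  have hdiff := Finset.card_sdiff_add_card_eq_card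
    (Finset.filter_subset_filter (fun x => x j = !true) (initSeg_mono ha))
  have hsplit := Finset.card_filter_add_card_filter_not (s := initSeg n a) (fun x => x j = true)
  rw [card_filter_initSeg_two_pow hk hj] at hdiff
  rw [card_initSeg (ha.trans (Nat.pow_le_pow_right two_pos hk))] at hsplit
  simp only [Bool.not_true, Bool.not_eq_true] at hflip hdiff hsplit
  have hpow : 2 ^ k = 2 ^ (k - 1) * 2 := by
    rw [← pow_succ, Nat.sub_add_cancel (by have := j.isLt; omega)]
  rw [mCount, mCount, show (2 : ℤ) ^ (k - 1) = ((2 ^ (k - 1) : ℕ) : ℤ) by push_cast; rfl]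
  omega
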